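/- The strength relation on the special-color labels Λ_s = {MM, MY0, MY1, XY00, XY01, XY10, XY11} with respect to the special-color constraint ℰ_s is exactly reflexivity together with the pairs: ℓ ≤ MM for every ℓ ∈ Λ_s; MY0 ≤ XY00, MY0 ≤ XY10; MY1 ≤ XY01, MY1 ≤ XY11. No other pairs of distinct labels are related. -/
import Mathlib


/-- A two-bit label: the first component is the input bit, the second the output bit. -/
abbrev TwoBit := Bool × Bool

def b00 : TwoBit := (false, false)
def b01 : TwoBit := (false, true)
def b10 : TwoBit := (true, false)
def b11 : TwoBit := (true, true)

/-- The 22 maximal bit triples. -/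
def bitTriples : List (Fin 3 → Set TwoBit) :=
  [ ![{b00, b10, b11}, {b00}, {b00}],
    ![{b01, b10, b11}, {b00}, {b01}],
    ![{b00, b10, b11}, {b01}, {b01}],
    ![{b00, b01, b11}, {b00}, {b10}],
    ![{b00, b01, b10}, {b00}, {b11}],
    ![{b00, b01, b10}, {b01}, {b10}],
    ![{b00, b01, b11}, {b01}, {b11}],
    ![{b01, b10, b11}, {b10}, {b10}],
    ![{b00, b10, b11}, {b10}, {b11}],
    ![{b01, b10, b11}, {b11}, {b11}],
    ![{b00, b10}, {b00}, {b00, b11}],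
    ![{b01, b11}, {b00}, {b01, b10}],
    ![{b00, b10}, {b01}, {b01, b10}],
    ![{b01, b11}, {b00, b11}, {b01}],
    ![{b00, b10}, {b01, b11}, {b10}],
    ![{b11}, {b00, b10}, {b00, b10}],
    ![{b10}, {b01, b10}, {b01, b10}],
    ![{b10}, {b00, b11}, {b00, b11}],
    ![{b00, b11}, {b01, b10}, {b11}],
    ![{b11}, {b01, b11}, {b01, b11}],
    ![{b10, b11}, {b00, b01}, {b00, b01}],
    ![{b10, b11}, {b10, b11}, {b10, b11}] ]

/-- The ten present-color labels Λ_p = {EE, MM, MY0, MY1, XM0, XM1, XY00, XY01, XY10, XY11}. -/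
inductive Lab where
  | EE : Lab
  | MM : Lab
  | MY : Bool → Lab
  | XM : Bool → Lab
  | XY : Bool → Bool → Lab
deriving DecidableEq

open Lab

/-- Augmentation of a set of two-bit labels: replace each two-bit label `xy` by `XY x y`;
add `XM x` if both `XY x 0` and `XY x 1` are present; add `MY y` if both `XY 0 y` and
`XY 1 y` are present; and always add `MM`. -/
def aug (T : Set TwoBit) : Set Lab :=
  {MM} ∪ {l | ∃ x y, (x, y) ∈ T ∧ l = XY x y}
    ∪ {l | ∃ x, (x, false) ∈ T ∧ (x, true) ∈ T ∧ l = XM x}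
    ∪ {l | ∃ y, (false, y) ∈ T ∧ (true, y) ∈ T ∧ l = MY y}

/-- The 23 condensed configurations defining the present-color constraint. -/
def condP : List (Fin 3 → Set Lab) :=
  bitTriples.map (fun T => fun j => aug (T j)) ++ [![{MM}, Set.univ, Set.univ]]

/-- The seven special-color labels Λ_s = {MM, MY0, MY1, XY00, XY01, XY10, XY11}. -/
inductive LabS where
  | MM : LabS
  | MY : Bool → LabS
  | XY : Bool → Bool → LabS
deriving DecidableEq

/-- The inclusion of the special-color labels Λ_s into the present-color labels Λ_p. -/
def embedS : LabS → Lab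
  | LabS.MM => Lab.MM
  | LabS.MY y => Lab.MY y
  | LabS.XY x y => Lab.XY x y

/-- The condensed configurations defining the special-color constraint, obtained from the
23 condensed configurations defining ℰ_p by deleting EE, XM0 and XM1 from every
component. -/
def condS : List (Fin 3 → Set LabS) :=
  condP.map (fun D => fun j => embedS ⁻¹' (D j))

/-- The special-color constraint ℰ_s: the family of size-3 multisets represented by the
condensed configurations `condS`. -/
def Es : Set (Multiset LabS) :=
  {C | ∃ D ∈ condS, ∃ l₁ ∈ D 0, ∃ l₂ ∈ D 1, ∃ l₃ ∈ D 2,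
    C = ({l₁, l₂, l₃} : Multiset LabS)}

/-- `l'` is at least as strong as `l` w.r.t. ℰ_s: for every multiset `{l, l₂, l₃} ∈ ℰ_s`,
also `{l', l₂, l₃} ∈ ℰ_s`. -/
def strongerS (l l' : LabS) : Prop :=
  ∀ l₂ l₃ : LabS,
    ({l, l₂, l₃} : Multiset LabS) ∈ Es → ({l', l₂, l₃} : Multiset LabS) ∈ Es


/-! ### Auxiliary material for the proof -/

section Aux

lemma aux_pair_eq_pair_iff {α : Type*} {a b x y : α} :
    ({a, b} : Multiset α) = {x, y} ↔ (a = x ∧ b = y) ∨ (a = y ∧ b = x) := by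
  constructor
  · intro h
    rw [show ({a,b} : Multiset α) = a ::ₘ {b} from rfl,
        show ({x,y} : Multiset α) = x ::ₘ {y} from rfl, Multiset.cons_eq_cons] at h
    rcases h with ⟨rfl, h⟩ | ⟨hne, cs, h1, h2⟩
    · left; exact ⟨rfl, by simpa using h⟩
    · rw [Multiset.singleton_eq_cons_iff] at h1 h2
      right; exact ⟨h2.1.symm, h1.1⟩
  · rintro (⟨rfl, rfl⟩ | ⟨rfl, rfl⟩)
    · rfl
    · exact Multiset.pair_comm a b

lemma aux_triple_eq_iff {α : Type*} {a b c x y z : α} :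
    ({a, b, c} : Multiset α) = {x, y, z} ↔
      (a = x ∧ b = y ∧ c = z) ∨ (a = x ∧ b = z ∧ c = y) ∨ (a = y ∧ b = x ∧ c = z) ∨
      (a = y ∧ b = z ∧ c = x) ∨ (a = z ∧ b = x ∧ c = y) ∨ (a = z ∧ b = y ∧ c = x) := by
  classical
  constructor
  · intro h
    rw [show ({a,b,c} : Multiset α) = a ::ₘ {b,c} from rfl,
        show ({x,y,z} : Multiset α) = x ::ₘ {y,z} from rfl, Multiset.cons_eq_cons] at h
    rcases h with ⟨rfl, h⟩ | ⟨hne, cs, h1, h2⟩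
    · rcases aux_pair_eq_pair_iff.mp h with ⟨rfl, rfl⟩ | ⟨rfl, rfl⟩ <;> simp
    · rw [show ({b,c} : Multiset α) = b ::ₘ {c} from rfl, Multiset.cons_eq_cons] at h1
      rcases h1 with ⟨rfl, rfl⟩ | ⟨hne2, ds, hd1, hd2⟩
      · rw [← Multiset.insert_eq_cons] at h2
        rcases aux_pair_eq_pair_iff.mp h2 with ⟨rfl, rfl⟩ | ⟨rfl, rfl⟩ <;> simp
      · rw [Multiset.singleton_eq_cons_iff] at hd1
        rcases hd1 with ⟨rfl, rfl⟩
        simp only [Multiset.cons_zero] at hd2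
        subst hd2
        rw [← Multiset.insert_eq_cons] at h2
        rcases aux_pair_eq_pair_iff.mp h2 with ⟨rfl, rfl⟩ | ⟨rfl, rfl⟩ <;> simp
  · rintro (⟨rfl, rfl, rfl⟩ | ⟨rfl, rfl, rfl⟩ | ⟨rfl, rfl, rfl⟩ | ⟨rfl, rfl, rfl⟩ |
      ⟨rfl, rfl, rfl⟩ | ⟨rfl, rfl, rfl⟩) <;>
    first
    | rfl
    | (refine Multiset.ext.mpr fun u => ?_
       simp [Multiset.count_cons, Multiset.count_singleton]
       try split_ifs <;> omega)

/-- Boolean membership test in `embedS ⁻¹' aug S`, where `L` is a list enumerating `S`. -/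
def augS (L : List TwoBit) : LabS → Bool
  | LabS.MM => true
  | LabS.MY y => decide ((false, y) ∈ L) && decide ((true, y) ∈ L)
  | LabS.XY x y => decide ((x, y) ∈ L)

lemma aux_aug_iff_augS (S : Set TwoBit) (L : List TwoBit) (h : ∀ p, p ∈ S ↔ p ∈ L)
    (l : LabS) : embedS l ∈ aug S ↔ augS L l = true := by
  rcases l with _ | y | ⟨x, y⟩
  · simp [aug, embedS, augS]
  · cases y <;> simp [aug, embedS, augS, ← h]
  · cases x <;> cases y <;> simp [aug, embedS, augS, ← h]

/-- List mirror of `bitTriples`. -/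
def bitTriplesL : List (Fin 3 → List TwoBit) :=
  [ ![[b00, b10, b11], [b00], [b00]],
    ![[b01, b10, b11], [b00], [b01]],
    ![[b00, b10, b11], [b01], [b01]],
    ![[b00, b01, b11], [b00], [b10]],
    ![[b00, b01, b10], [b00], [b11]],
    ![[b00, b01, b10], [b01], [b10]],
    ![[b00, b01, b11], [b01], [b11]],
    ![[b01, b10, b11], [b10], [b10]],
    ![[b00, b10, b11], [b10], [b11]],
    ![[b01, b10, b11], [b11], [b11]],
    ![[b00, b10], [b00], [b00, b11]],
    ![[b01, b11], [b00], [b01, b10]],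
    ![[b00, b10], [b01], [b01, b10]],
    ![[b01, b11], [b00, b11], [b01]],
    ![[b00, b10], [b01, b11], [b10]],
    ![[b11], [b00, b10], [b00, b10]],
    ![[b10], [b01, b10], [b01, b10]],
    ![[b10], [b00, b11], [b00, b11]],
    ![[b00, b11], [b01, b10], [b11]],
    ![[b11], [b01, b11], [b01, b11]],
    ![[b10, b11], [b00, b01], [b00, b01]],
    ![[b10, b11], [b10, b11], [b10, b11]] ]

lemma aux_bridge :
    List.Forall₂ (fun (S : Fin 3 → Set TwoBit) (L : Fin 3 → List TwoBit) =>
      ∀ (j : Fin 3) (p : TwoBit), p ∈ S j ↔ p ∈ L j) bitTriples bitTriplesL := by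
  unfold bitTriples bitTriplesL
  repeat' refine List.Forall₂.cons ?_ ?_
  any_goals exact List.Forall₂.nil
  all_goals
    intro j p
    fin_cases j <;>
      simp [Set.mem_insert_iff, Set.mem_singleton_iff, List.mem_cons, List.not_mem_nil]

def chk (L : Fin 3 → List TwoBit) (p q r : LabS) : Bool :=
  augS (L 0) p && (augS (L 1) q && augS (L 2) r)

def chkP (L : Fin 3 → List TwoBit) (a b c : LabS) : Bool :=
  chk L a b c || (chk L a c b || (chk L b a c || (chk L b c a || (chk L c a b || chk L c b a))))

/-- Boolean membership test for `{a, b, c} ∈ Es`. -/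
def EsT (a b c : LabS) : Bool :=
  bitTriplesL.any (fun L => chkP L a b c) || a == LabS.MM || b == LabS.MM || c == LabS.MM

lemma aux_config_mem_iff (S : Fin 3 → Set TwoBit) (L : Fin 3 → List TwoBit)
    (h : ∀ (j : Fin 3) (p : TwoBit), p ∈ S j ↔ p ∈ L j) (a b c : LabS) :
    (∃ l₁ ∈ embedS ⁻¹' aug (S 0), ∃ l₂ ∈ embedS ⁻¹' aug (S 1), ∃ l₃ ∈ embedS ⁻¹' aug (S 2),
      ({a, b, c} : Multiset LabS) = {l₁, l₂, l₃}) ↔ chkP L a b c = true := by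
  constructor
  · rintro ⟨l₁, h₁, l₂, h₂, l₃, h₃, he⟩
    rcases aux_triple_eq_iff.mp he with ⟨rfl, rfl, rfl⟩ | ⟨rfl, rfl, rfl⟩ | ⟨rfl, rfl, rfl⟩ |
      ⟨rfl, rfl, rfl⟩ | ⟨rfl, rfl, rfl⟩ | ⟨rfl, rfl, rfl⟩ <;>
    · rw [Set.mem_preimage, aux_aug_iff_augS (S 0) (L 0) (h 0)] at h₁
      rw [Set.mem_preimage, aux_aug_iff_augS (S 1) (L 1) (h 1)] at h₂
      rw [Set.mem_preimage, aux_aug_iff_augS (S 2) (L 2) (h 2)] at h₃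
      simp [chkP, chk, h₁, h₂, h₃]
  · intro hb
    simp only [chkP, chk, Bool.or_eq_true, Bool.and_eq_true] at hb
    have mk : ∀ p q r : LabS, augS (L 0) p = true → augS (L 1) q = true →
        augS (L 2) r = true → ({a, b, c} : Multiset LabS) = {p, q, r} →
        (∃ l₁ ∈ embedS ⁻¹' aug (S 0), ∃ l₂ ∈ embedS ⁻¹' aug (S 1),
          ∃ l₃ ∈ embedS ⁻¹' aug (S 2), ({a, b, c} : Multiset LabS) = {l₁, l₂, l₃}) := by
      intro p q r hp hq hr he
      exact ⟨p, (aux_aug_iff_augS (S 0) (L 0) (h 0) p).mpr hp,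
             q, (aux_aug_iff_augS (S 1) (L 1) (h 1) q).mpr hq,
             r, (aux_aug_iff_augS (S 2) (L 2) (h 2) r).mpr hr, he⟩
    rcases hb with ⟨h1, h2, h3⟩ | ⟨h1, h2, h3⟩ | ⟨h1, h2, h3⟩ | ⟨h1, h2, h3⟩ |
        ⟨h1, h2, h3⟩ | ⟨h1, h2, h3⟩
    · exact mk a b c h1 h2 h3 rfl
    · exact mk a c b h1 h2 h3 (aux_triple_eq_iff.mpr (by simp))
    · exact mk b a c h1 h2 h3 (aux_triple_eq_iff.mpr (by simp))
    · exact mk b c a h1 h2 h3 (aux_triple_eq_iff.mpr (by simp))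
    · exact mk c a b h1 h2 h3 (aux_triple_eq_iff.mpr (by simp))
    · exact mk c b a h1 h2 h3 (aux_triple_eq_iff.mpr (by simp))

lemma aux_exists_mem_iff_of_forall₂ {α β : Type*} {R : α → β → Prop} {P : α → Prop}
    {Q : β → Prop} {l₁ : List α} {l₂ : List β} (h : List.Forall₂ R l₁ l₂)
    (hpq : ∀ a b, R a b → (P a ↔ Q b)) : (∃ a ∈ l₁, P a) ↔ (∃ b ∈ l₂, Q b) := by
  induction h with
  | nil => simp
  | cons hr htail ih =>
    simp only [List.mem_cons]
    constructor
    · rintro ⟨a, (rfl | ha), hPa⟩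
      · exact ⟨_, Or.inl rfl, (hpq _ _ hr).mp hPa⟩
      · obtain ⟨b, hb, hQb⟩ := ih.mp ⟨a, ha, hPa⟩
        exact ⟨b, Or.inr hb, hQb⟩
    · rintro ⟨b, (rfl | hb), hQb⟩
      · exact ⟨_, Or.inl rfl, (hpq _ _ hr).mpr hQb⟩
      · obtain ⟨a, ha, hPa⟩ := ih.mpr ⟨b, hb, hQb⟩
        exact ⟨a, Or.inr ha, hPa⟩

lemma aux_embedS_eq_MM (l : LabS) : embedS l = Lab.MM ↔ l = LabS.MM := by
  cases l <;> simp [embedS]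

lemma aux_memEs_triple (a b c : LabS) :
    ({a, b, c} : Multiset LabS) ∈ Es ↔ EsT a b c = true := by
  have hcond : condS = bitTriples.map (fun T => fun j => embedS ⁻¹' aug (T j)) ++
      [fun j => embedS ⁻¹' ((![{Lab.MM}, Set.univ, Set.univ] : Fin 3 → Set Lab) j)] := by
    simp [condS, condP, List.map_map, Function.comp_def]
  constructor
  · rintro ⟨D, hD, l₁, h₁, l₂, h₂, l₃, h₃, he⟩
    rw [hcond, List.mem_append] at hD
    rcases hD with hD | hD
    · rw [List.mem_map] at hD
      obtain ⟨T, hT, rfl⟩ := hD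
      have : ∃ T' ∈ bitTriples, (∃ l₁ ∈ embedS ⁻¹' aug (T' 0), ∃ l₂ ∈ embedS ⁻¹' aug (T' 1),
          ∃ l₃ ∈ embedS ⁻¹' aug (T' 2), ({a, b, c} : Multiset LabS) = {l₁, l₂, l₃}) :=
        ⟨T, hT, l₁, h₁, l₂, h₂, l₃, h₃, he⟩
      have h2 : ∃ L ∈ bitTriplesL, chkP L a b c = true :=
        (aux_exists_mem_iff_of_forall₂ aux_bridge
          (fun S L hSL => aux_config_mem_iff S L hSL a b c)).mp this
      obtain ⟨L, hL, hLc⟩ := h2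
      have : bitTriplesL.any (fun L => chkP L a b c) = true :=
        List.any_eq_true.mpr ⟨L, hL, hLc⟩
      simp [EsT, this]
    · rw [List.mem_singleton] at hD
      subst hD
      simp only [Matrix.cons_val_zero, Set.mem_preimage, Set.mem_singleton_iff,
        aux_embedS_eq_MM] at h₁
      subst h₁
      rcases aux_triple_eq_iff.mp he with ⟨rfl, _, _⟩ | ⟨rfl, _, _⟩ | ⟨_, rfl, _⟩ |
        ⟨_, _, rfl⟩ | ⟨_, rfl, _⟩ | ⟨_, _, rfl⟩ <;> simp [EsT]
  · intro hb
    simp only [EsT, Bool.or_eq_true, List.any_eq_true, beq_iff_eq] at hb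
    rcases hb with ⟨⟨⟨L, hL, hLc⟩ | rfl⟩ | rfl⟩ | rfl
    · obtain ⟨T, hT, hTc⟩ := (aux_exists_mem_iff_of_forall₂ aux_bridge
        (fun S L hSL => aux_config_mem_iff S L hSL a b c)).mpr ⟨L, hL, hLc⟩
      obtain ⟨l₁, h₁, l₂, h₂, l₃, h₃, he⟩ := hTc
      refine ⟨fun j => embedS ⁻¹' aug (T j), ?_, l₁, h₁, l₂, h₂, l₃, h₃, he⟩
      rw [hcond, List.mem_append]
      exact Or.inl (List.mem_map.mpr ⟨T, hT, rfl⟩)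
    · refine ⟨fun j => embedS ⁻¹' ((![{Lab.MM}, Set.univ, Set.univ] : Fin 3 → Set Lab) j),
        ?_, LabS.MM, by simp [embedS], b, by simp, c, by simp, rfl⟩
      rw [hcond, List.mem_append]
      exact Or.inr (List.mem_singleton.mpr rfl)
    · refine ⟨fun j => embedS ⁻¹' ((![{Lab.MM}, Set.univ, Set.univ] : Fin 3 → Set Lab) j),
        ?_, LabS.MM, by simp [embedS], a, by simp, c, by simp,
        aux_triple_eq_iff.mpr (by simp)⟩
      rw [hcond, List.mem_append]
      exact Or.inr (List.mem_singleton.mpr rfl)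
    · refine ⟨fun j => embedS ⁻¹' ((![{Lab.MM}, Set.univ, Set.univ] : Fin 3 → Set Lab) j),
        ?_, LabS.MM, by simp [embedS], a, by simp, b, by simp,
        aux_triple_eq_iff.mpr (by simp)⟩
      rw [hcond, List.mem_append]
      exact Or.inr (List.mem_singleton.mpr rfl)

def allS : List LabS :=
  [.MM, .MY false, .MY true, .XY false false, .XY false true, .XY true false, .XY true true]

instance : Fintype LabS where
  elems := ⟨allS, by decide⟩
  complete := by
    rintro (_ | y | ⟨x, y⟩) <;>
      first
      | (cases x <;> cases y <;> simp [allS])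
      | (cases y <;> simp [allS])
      | simp [allS]

end Aux

/-- **The strength relation on the special-color labels Λ_s w.r.t. ℰ_s** is exactly
reflexivity together with: `ℓ ≤ MM` for every `ℓ`; `MY y ≤ XY x y`.
No other pairs of distinct labels are related. -/
theorem special_color_strength (l l' : LabS) :
    strongerS l l' ↔
      (l = l' ∨ l' = LabS.MM ∨
        (∃ x y, l = LabS.MY y ∧ l' = LabS.XY x y)) := by
  simp only [strongerS, aux_memEs_triple]
  revert l l'
  decide
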